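/- arXiv:1605.06348 — 5 statements merged into one kernel-verified Lean document; each statement's English description precedes it below -/
import Mathlib

section
/- There exists a non-negative solution (p_{ij})_{-s \le i,j \le s} to the moment-matching equations \sum i^2 p_{ij} = 1, \sum j^2 p_{ij} = R^{-2}, \sum ij p_{ij} = R^{-1}\rho, \sum i p_{ij} = 0, \sum j p_{ij} = 0, \sum p_{ij} = 1 if and only if inf_{0 < z_1 < 2|\rho|/R} ( R^2 z_1 + max_{\xi \in S} (2\xi - \xi^2 z_1) ) \ge 2R|\rho|, where S = { i/j : 1 \le i,j \le s, i,j integers }. -/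
/-!
Write `t = |ρ| / R` and `b = R⁻²`. Necessity: for a lattice point `(x, y) ≠ 0` and `z > 0`,
taking `ξ = |x| / |y|` gives `2|xy| ≤ z x² + m y²` with `m = max_{ξ ∈ S} (2ξ - ξ² z)`, and
integrating against `p` gives `2t ≤ z + b m`.

Sufficiency: the mass at the origin is unconstrained in sign, so after symmetrizing it is enough
to find nonnegative weights with second moments at most `1` and `b` and cross moment `±t`; the
points `(1, 0)` and `(0, 1)` absorb the slack. A direction `(i, j)` with `ξ = i / j` contributes
moments proportional to `(ξ², 1, ξ)`, so one needs a measure on `S` with `∫ ξ² ≤ 1`, mass `≤ b`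
and `∫ ξ = t`. Let `ξ₁` be the largest point of `S` with `t ξ₁ ≤ 1` and `ξ₂` the smallest with
`t ≤ b ξ₂`. If `ξ₂ ≤ ξ₁`, the single atom `ξ₂` works. Otherwise no point of `S` lies strictly
between them, the two weights with mass `b` and first moment `t` are forced, and their second
moment is at most `1` precisely by the condition at `z = 2 / (ξ₁ + ξ₂)`.
-/

open Finset

noncomputable def grid (s : ℕ) : Finset (ℤ × ℤ) := Finset.Icc (-(s:ℤ)) s ×ˢ Finset.Icc (-(s:ℤ)) s

/-- Non-negative moment-matching solution for parameters `(R, ρ, s)`. -/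
def IsMMSol (s : ℕ) (R ρ : ℝ) (p : ℤ × ℤ → ℝ) : Prop :=
  (∀ q ∈ grid s, q ≠ (0,0) → 0 ≤ p q) ∧
  (∑ q ∈ grid s, (q.1:ℝ)^2 * p q = 1) ∧
  (∑ q ∈ grid s, (q.2:ℝ)^2 * p q = (R⁻¹)^2) ∧
  (∑ q ∈ grid s, ((q.1:ℝ) * (q.2:ℝ)) * p q = R⁻¹ * ρ) ∧
  (∑ q ∈ grid s, (q.1:ℝ) * p q = 0) ∧
  (∑ q ∈ grid s, (q.2:ℝ) * p q = 0) ∧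
  (∑ q ∈ grid s, p q = 1)

/-- The set `S = {i/j : 1 ≤ i,j ≤ s}`. -/
noncomputable def Sset (s : ℕ) : Finset ℝ :=
  ((Finset.Icc 1 s) ×ˢ (Finset.Icc 1 s)).image fun q => (q.1 : ℝ) / (q.2 : ℝ)

theorem Sset_nonempty {s : ℕ} (hs : 1 ≤ s) : (Sset s).Nonempty := by
  refine ⟨1, Finset.mem_image.2 ⟨(1,1), ?_, by norm_num⟩⟩
  simp [Finset.mem_product]
  omega

lemma mem_grid {s : ℕ} {q : ℤ × ℤ} : q ∈ grid s ↔ |q.1| ≤ s ∧ |q.2| ≤ s := by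
  simp [grid, abs_le]

lemma neg_mem_grid {s : ℕ} {q : ℤ × ℤ} (hq : q ∈ grid s) : -q ∈ grid s := by
  simpa [mem_grid] using hq

lemma mem_Sset {s : ℕ} {ξ : ℝ} :
    ξ ∈ Sset s ↔ ∃ i j : ℕ, (1 ≤ i ∧ i ≤ s) ∧ (1 ≤ j ∧ j ≤ s) ∧ (i : ℝ) / j = ξ := by
  simp [Sset, and_assoc]

lemma pos_of_mem_Sset {s : ℕ} {ξ : ℝ} (hξ : ξ ∈ Sset s) : 0 < ξ := by
  obtain ⟨i, j, ⟨hi, -⟩, ⟨hj, -⟩, rfl⟩ := mem_Sset.1 hξ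
  have : (0 : ℝ) < i := by exact_mod_cast hi
  have : (0 : ℝ) < j := by exact_mod_cast hj
  positivity

lemma one_div_mem_Sset {s : ℕ} (hs : 1 ≤ s) : 1 / (s : ℝ) ∈ Sset s :=
  mem_Sset.2 ⟨1, s, ⟨le_rfl, hs⟩, ⟨hs, le_rfl⟩, by norm_num⟩

lemma abs_div_abs_mem_Sset {s : ℕ} {q : ℤ × ℤ} (hq : q ∈ grid s) (h₁ : q.1 ≠ 0) (h₂ : q.2 ≠ 0) :
    |(q.1 : ℝ)| / |(q.2 : ℝ)| ∈ Sset s := by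
  rw [mem_grid, abs_le, abs_le] at hq
  refine mem_Sset.2 ⟨q.1.natAbs, q.2.natAbs, ⟨?_, ?_⟩, ⟨?_, ?_⟩, by simp [Nat.cast_natAbs]⟩ <;>
    omega

lemma abs_mul_le_of_mem_grid {s : ℕ} {q : ℤ × ℤ} (hq : q ∈ grid s) :
    |(q.1 : ℝ) * q.2| ≤ s * (q.1 : ℝ) ^ 2 := by
  have h₁ : |(q.1 : ℝ)| ≤ (q.1 : ℝ) ^ 2 := by
    have := Int.natAbs_le_self_sq q.1
    rw [Int.natCast_natAbs] at this
    exact_mod_cast this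
  have h₂ : |(q.2 : ℝ)| ≤ s := by exact_mod_cast (mem_grid.1 hq).2
  rw [abs_mul]
  nlinarith [abs_nonneg (q.1 : ℝ), abs_nonneg (q.2 : ℝ)]

lemma two_mul_abs_mul_le_of_mem_grid {s : ℕ} {q : ℤ × ℤ} (hq : q ∈ grid s) {z m : ℝ}
    (hz : 0 ≤ z) (hm₀ : 0 ≤ m) (hm : ∀ ξ ∈ Sset s, 2 * ξ - ξ ^ 2 * z ≤ m) :
    2 * |(q.1 : ℝ) * q.2| ≤ z * (q.1 : ℝ) ^ 2 + m * (q.2 : ℝ) ^ 2 := by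
  rcases eq_or_ne q.1 0 with h₁ | h₁
  · simp [h₁]; positivity
  rcases eq_or_ne q.2 0 with h₂ | h₂
  · simp [h₂]; positivity
  have hy : 0 < |(q.2 : ℝ)| := by positivity
  have key := mul_le_mul_of_nonneg_right (hm _ (abs_div_abs_mem_Sset hq h₁ h₂))
    (sq_nonneg |(q.2 : ℝ)|)
  rw [abs_mul, ← sq_abs (q.1 : ℝ), ← sq_abs (q.2 : ℝ)]
  have : (2 * (|(q.1 : ℝ)| / |(q.2 : ℝ)|) - (|(q.1 : ℝ)| / |(q.2 : ℝ)|) ^ 2 * z) * |(q.2 : ℝ)| ^ 2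
      = 2 * (|(q.1 : ℝ)| * |(q.2 : ℝ)|) - z * |(q.1 : ℝ)| ^ 2 := by field_simp
  linarith

namespace IsMMSol

variable {s : ℕ} {R ρ : ℝ} {p : ℤ × ℤ → ℝ}

lemma sum_mul_le_sum_mul (hp : IsMMSol s R ρ p) {f g : ℤ × ℤ → ℝ} (h₀ : f (0, 0) = g (0, 0))
    (hfg : ∀ q ∈ grid s, q ≠ (0, 0) → f q ≤ g q) :
    ∑ q ∈ grid s, f q * p q ≤ ∑ q ∈ grid s, g q * p q := by
  refine sum_le_sum fun q hq => ?_
  rcases eq_or_ne q (0, 0) with rfl | hq₀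
  · rw [h₀]
  · exact mul_le_mul_of_nonneg_right (hfg q hq hq₀) (hp.1 q hq hq₀)

lemma abs_le_sum_abs_mul (hp : IsMMSol s R ρ p) :
    |R⁻¹ * ρ| ≤ ∑ q ∈ grid s, |(q.1 : ℝ) * q.2| * p q := by
  rw [← hp.2.2.2.1]
  refine (abs_sum_le_sum_abs _ _).trans (sum_le_sum fun q hq => ?_)
  rcases eq_or_ne q (0, 0) with rfl | hq₀
  · simp
  · rw [abs_mul _ (p q), abs_of_nonneg (hp.1 q hq hq₀)]

lemma abs_le_natCast (hp : IsMMSol s R ρ p) : |R⁻¹ * ρ| ≤ s := by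
  calc |R⁻¹ * ρ| ≤ ∑ q ∈ grid s, |(q.1 : ℝ) * q.2| * p q := hp.abs_le_sum_abs_mul
    _ ≤ ∑ q ∈ grid s, (s * (q.1 : ℝ) ^ 2) * p q :=
        hp.sum_mul_le_sum_mul (by simp) fun q hq _ => abs_mul_le_of_mem_grid hq
    _ = s := by simp only [mul_assoc, ← mul_sum, hp.2.1, mul_one]

lemma two_mul_abs_le (hp : IsMMSol s R ρ p) {z m : ℝ} (hz : 0 ≤ z) (hm₀ : 0 ≤ m)
    (hm : ∀ ξ ∈ Sset s, 2 * ξ - ξ ^ 2 * z ≤ m) : 2 * |R⁻¹ * ρ| ≤ z + m * R⁻¹ ^ 2 := by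
  calc 2 * |R⁻¹ * ρ| ≤ ∑ q ∈ grid s, (2 * |(q.1 : ℝ) * q.2|) * p q := by
        simpa only [mul_assoc, ← mul_sum] using
          mul_le_mul_of_nonneg_left hp.abs_le_sum_abs_mul zero_le_two
    _ ≤ ∑ q ∈ grid s, (z * (q.1 : ℝ) ^ 2 + m * (q.2 : ℝ) ^ 2) * p q :=
        hp.sum_mul_le_sum_mul (by simp) fun q hq _ => two_mul_abs_mul_le_of_mem_grid hq hz hm₀ hm
    _ = z + m * R⁻¹ ^ 2 := by
        simp only [add_mul, mul_assoc, sum_add_distrib, ← mul_sum, hp.2.1, hp.2.2.1, mul_one]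

end IsMMSol

lemma two_mul_mul_abs_le_iff {R ρ z m : ℝ} (hR : 0 < R) :
    2 * R * |ρ| ≤ R ^ 2 * z + m ↔ 2 * |R⁻¹ * ρ| ≤ z + m * R⁻¹ ^ 2 := by
  rw [abs_mul, abs_inv, abs_of_pos hR, ← mul_le_mul_iff_of_pos_left (pow_pos hR 2)]
  field_simp

lemma IsMMSol.two_mul_mul_abs_le_sup' {s : ℕ} (hs : 1 ≤ s) {R ρ : ℝ} (hR : 0 < R) {p : ℤ × ℤ → ℝ}
    (hp : IsMMSol s R ρ p) {z : ℝ} (hz : 0 < z) (hzρ : z < 2 * |ρ| / R) :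
    2 * R * |ρ| ≤ R ^ 2 * z + (Sset s).sup' (Sset_nonempty hs) (fun ξ => 2 * ξ - ξ ^ 2 * z) := by
  set m := (Sset s).sup' (Sset_nonempty hs) (fun ξ => 2 * ξ - ξ ^ 2 * z)
  have hm : ∀ ξ ∈ Sset s, 2 * ξ - ξ ^ 2 * z ≤ m :=
    fun _ hξ => le_sup' (fun ξ => 2 * ξ - ξ ^ 2 * z) hξ
  have hzs : z ≤ 2 * s := by
    have : |R⁻¹ * ρ| = |ρ| / R := by rw [abs_mul, abs_inv, abs_of_pos hR, inv_mul_eq_div]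
    linarith [hp.abs_le_natCast, mul_div_assoc 2 |ρ| R]
  have hm₀ : 0 ≤ m := by
    refine le_trans ?_ (hm _ (one_div_mem_Sset hs))
    have hs' : (0 : ℝ) < s := by exact_mod_cast hs
    rw [show 2 * (1 / (s : ℝ)) - (1 / s) ^ 2 * z = (2 * s - z) / s ^ 2 by field_simp]
    exact div_nonneg (by linarith) (sq_nonneg _)
  exact (two_mul_mul_abs_le_iff hR).2 (hp.two_mul_abs_le hz.le hm₀ hm)

/-- The paper's condition divided by `R²`, with `b = R⁻²` and `t = |ρ| / R`. -/
def LocalityCondition (S : Finset ℝ) (b t : ℝ) : Prop :=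
  ∀ z : ℝ, 0 < z → z < 2 * t → ∃ ξ ∈ S, 2 * t ≤ z + b * (2 * ξ - ξ ^ 2 * z)

/-- An atom `ξ = i / j` of weight `μ` of the measure `μ₁ δ_ξ₁ + μ₂ δ_ξ₂` on `S` is realised on
the lattice by mass `μ / j²` at `(i, ±j)`. -/
def TwoAtomFeasible (S : Finset ℝ) (b t : ℝ) : Prop :=
  ∃ ξ₁ ∈ S, ∃ ξ₂ ∈ S, ∃ μ₁ μ₂ : ℝ, 0 ≤ μ₁ ∧ 0 ≤ μ₂ ∧
    μ₁ * ξ₁ ^ 2 + μ₂ * ξ₂ ^ 2 ≤ 1 ∧ μ₁ + μ₂ ≤ b ∧ μ₁ * ξ₁ + μ₂ * ξ₂ = t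

section TwoAtom

variable {S : Finset ℝ} {b t : ℝ}

lemma twoAtomFeasible_of_single {ξ : ℝ} (hξS : ξ ∈ S) (hξ : 0 < ξ) (ht : 0 ≤ t)
    (htb : t ≤ b * ξ) (htξ : t * ξ ≤ 1) : TwoAtomFeasible S b t := by
  refine ⟨ξ, hξS, ξ, hξS, t / ξ, 0, by positivity, le_rfl, ?_, ?_, ?_⟩
  · have : t / ξ * ξ ^ 2 = t * ξ := by field_simp
    rwa [zero_mul, add_zero, this]
  · rwa [add_zero, div_le_iff₀ hξ]
  · field_simp; ring

lemma twoAtomFeasible_of_bracket {ξ₁ ξ₂ : ℝ} (h₁ : ξ₁ ∈ S) (h₂ : ξ₂ ∈ S) (hlt : ξ₁ < ξ₂)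
    (hb₁ : b * ξ₁ ≤ t) (hb₂ : t ≤ b * ξ₂) (hsec : t * (ξ₁ + ξ₂) ≤ 1 + b * ξ₁ * ξ₂) :
    TwoAtomFeasible S b t := by
  have hd : 0 < ξ₂ - ξ₁ := sub_pos.2 hlt
  refine ⟨ξ₁, h₁, ξ₂, h₂, (b * ξ₂ - t) / (ξ₂ - ξ₁), (t - b * ξ₁) / (ξ₂ - ξ₁),
    div_nonneg (by linarith) hd.le, div_nonneg (by linarith) hd.le, ?_, ?_, ?_⟩
  · have : (b * ξ₂ - t) / (ξ₂ - ξ₁) * ξ₁ ^ 2 + (t - b * ξ₁) / (ξ₂ - ξ₁) * ξ₂ ^ 2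
        = t * (ξ₁ + ξ₂) - b * ξ₁ * ξ₂ := by field_simp; ring
    linarith
  · exact le_of_eq (by field_simp; ring)
  · field_simp; ring

lemma LocalityCondition.exists_mul_le_one (h : LocalityCondition S b t) (hS : ∀ ξ ∈ S, 0 < ξ)
    (hne : S.Nonempty) (hb : 0 ≤ b) : ∃ ξ ∈ S, t * ξ ≤ 1 := by
  by_contra! hlt
  set m := S.min' hne
  have hm : 0 < m := hS m (S.min'_mem hne)
  have htm : 1 < t * m := hlt m (S.min'_mem hne)
  have hz : 2 / m < 2 * t := by rw [div_lt_iff₀ hm]; linarith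
  obtain ⟨ξ, hξS, hξ⟩ := h (2 / m) (by positivity) hz
  have hmξ : m ≤ ξ := S.min'_le ξ hξS
  have hneg : b * (2 * ξ - ξ ^ 2 * (2 / m)) ≤ 0 := by
    have : 2 * ξ - ξ ^ 2 * (2 / m) = 2 * ξ * (m - ξ) / m := by field_simp
    rw [this]
    exact mul_nonpos_of_nonneg_of_nonpos hb
      (div_nonpos_of_nonpos_of_nonneg (by nlinarith [hS ξ hξS]) hm.le)
  linarith

lemma LocalityCondition.exists_le_mul (h : LocalityCondition S b t) (hS : ∀ ξ ∈ S, 0 < ξ)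
    (hne : S.Nonempty) (hb : 0 < b) : ∃ ξ ∈ S, t ≤ b * ξ := by
  by_contra! hlt
  set M := S.max' hne
  have hM : 0 < b * M := mul_pos hb (hS M (S.max'_mem hne))
  have htM : b * M < t := hlt M (S.max'_mem hne)
  obtain ⟨ξ, hξS, hξ⟩ := h (t - b * M) (by linarith) (by linarith)
  have hξM : b * ξ ≤ b * M := mul_le_mul_of_nonneg_left (S.le_max' ξ hξS) hb.le
  have : 0 < b * ξ ^ 2 * (t - b * M) := mul_pos (mul_pos hb (pow_pos (hS ξ hξS) 2)) (by linarith)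
  nlinarith

lemma LocalityCondition.mul_add_le_of_gap (h : LocalityCondition S b t) (hb : 0 ≤ b)
    {ξ₁ ξ₂ : ℝ} (hpos : 0 < ξ₁ + ξ₂) (hle : ξ₁ ≤ ξ₂) (hgap : ∀ ξ ∈ S, ξ ≤ ξ₁ ∨ ξ₂ ≤ ξ)
    (hlt : 1 < t * (ξ₁ + ξ₂)) : t * (ξ₁ + ξ₂) ≤ 1 + b * ξ₁ * ξ₂ := by
  set z := 2 / (ξ₁ + ξ₂)
  have hz : z * (ξ₁ + ξ₂) = 2 := div_mul_cancel₀ 2 hpos.ne'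
  obtain ⟨ξ, hξS, hξ⟩ := h z (by positivity) (by rw [div_lt_iff₀ hpos]; linarith)
  have hprod : 0 ≤ (ξ - ξ₁) * (ξ - ξ₂) := by
    rcases hgap ξ hξS with hξ₁ | hξ₂
    · exact mul_nonneg_of_nonpos_of_nonpos (by linarith) (by linarith)
    · exact mul_nonneg (by linarith) (by linarith)
  have hsec : 2 * ξ - ξ ^ 2 * z ≤ z * (ξ₁ * ξ₂) := by
    have : 2 * ξ - ξ ^ 2 * z = z * (ξ₁ * ξ₂ - (ξ - ξ₁) * (ξ - ξ₂)) := by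
      linear_combination (-ξ) * hz
    rw [this]
    exact mul_le_mul_of_nonneg_left (by linarith) (by positivity)
  have key : 2 * t ≤ z * (1 + b * ξ₁ * ξ₂) := by
    calc 2 * t ≤ z + b * (2 * ξ - ξ ^ 2 * z) := hξ
      _ ≤ z + b * (z * (ξ₁ * ξ₂)) := by gcongr
      _ = z * (1 + b * ξ₁ * ξ₂) := by ring
  have := mul_le_mul_of_nonneg_right key hpos.le
  have e : z * (1 + b * ξ₁ * ξ₂) * (ξ₁ + ξ₂) = 2 * (1 + b * ξ₁ * ξ₂) := by
    linear_combination (1 + b * ξ₁ * ξ₂) * hz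
  linarith

lemma LocalityCondition.twoAtomFeasible (h : LocalityCondition S b t) (hS : ∀ ξ ∈ S, 0 < ξ)
    (hne : S.Nonempty) (hb : 0 < b) (ht : 0 ≤ t) (htb : t ^ 2 ≤ b) : TwoAtomFeasible S b t := by
  set S₁ := S.filter (fun ξ => t * ξ ≤ 1)
  set S₂ := S.filter (fun ξ => t ≤ b * ξ)
  have hS₁ : S₁.Nonempty := by
    obtain ⟨ξ, hξS, hξ⟩ := h.exists_mul_le_one hS hne hb.le
    exact ⟨ξ, mem_filter.2 ⟨hξS, hξ⟩⟩
  have hS₂ : S₂.Nonempty := by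
    obtain ⟨ξ, hξS, hξ⟩ := h.exists_le_mul hS hne hb
    exact ⟨ξ, mem_filter.2 ⟨hξS, hξ⟩⟩
  obtain ⟨hξ₁S, htξ₁⟩ := mem_filter.1 (S₁.max'_mem hS₁)
  obtain ⟨hξ₂S, htξ₂⟩ := mem_filter.1 (S₂.min'_mem hS₂)
  set ξ₁ := S₁.max' hS₁
  set ξ₂ := S₂.min' hS₂
  rcases le_or_gt ξ₂ ξ₁ with hle | hlt
  · exact twoAtomFeasible_of_single hξ₂S (hS ξ₂ hξ₂S) ht htξ₂
      ((mul_le_mul_of_nonneg_left hle ht).trans htξ₁)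
  have hbξ₁ : b * ξ₁ < t := by
    by_contra! hc
    exact hlt.not_ge (S₂.min'_le ξ₁ (mem_filter.2 ⟨hξ₁S, hc⟩))
  have h1ξ₂ : 1 < t * ξ₂ := by
    by_contra! hc
    exact hlt.not_ge (S₁.le_max' ξ₂ (mem_filter.2 ⟨hξ₂S, hc⟩))
  have hgap : ∀ ξ ∈ S, ξ ≤ ξ₁ ∨ ξ₂ ≤ ξ := by
    intro ξ hξS
    by_cases hc : t * ξ ≤ 1
    · exact Or.inl (S₁.le_max' ξ (mem_filter.2 ⟨hξS, hc⟩))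
    · have hξ := hS ξ hξS
      -- `t < t²ξ ≤ bξ` because `tξ > 1`
      refine Or.inr (S₂.min'_le ξ (mem_filter.2 ⟨hξS, ?_⟩))
      nlinarith [mul_le_mul_of_nonneg_right htb hξ.le]
  have hpos : 0 < ξ₁ + ξ₂ := add_pos (hS ξ₁ hξ₁S) (hS ξ₂ hξ₂S)
  exact twoAtomFeasible_of_bracket hξ₁S hξ₂S hlt hbξ₁.le htξ₂
    (h.mul_add_le_of_gap hb.le hpos hlt.le hgap (by nlinarith [hS ξ₁ hξ₁S]))

end TwoAtom

lemma sum_grid_comp_neg (s : ℕ) (f : ℤ × ℤ → ℝ) : ∑ q ∈ grid s, f (-q) = ∑ q ∈ grid s, f q :=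
  sum_nbij' Neg.neg Neg.neg (fun _ => neg_mem_grid) (fun _ => neg_mem_grid) (by simp) (by simp)
    fun _ _ => rfl

lemma sum_mul_single {s : ℕ} {a : ℤ × ℤ} (ha : a ∈ grid s) (f : ℤ × ℤ → ℝ) (c : ℝ) :
    ∑ q ∈ grid s, f q * (Pi.single a c : ℤ × ℤ → ℝ) q = f a * c := by
  simp [Pi.single_apply, ha]

lemma exists_isMMSol_of_secondMoments {s : ℕ} {R ρ : ℝ} {w : ℤ × ℤ → ℝ}
    (hw : ∀ q ∈ grid s, 0 ≤ w q) (h₁₁ : ∑ q ∈ grid s, (q.1 : ℝ) ^ 2 * w q = 1)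
    (h₂₂ : ∑ q ∈ grid s, (q.2 : ℝ) ^ 2 * w q = R⁻¹ ^ 2)
    (h₁₂ : ∑ q ∈ grid s, ((q.1 : ℝ) * q.2) * w q = R⁻¹ * ρ) : ∃ p, IsMMSol s R ρ p := by
  set v : ℤ × ℤ → ℝ := fun q => (w q + w (-q)) / 2
  set p : ℤ × ℤ → ℝ := v + Pi.single (0, 0) (1 - ∑ q ∈ grid s, v q)
  have h₀ : ((0, 0) : ℤ × ℤ) ∈ grid s := by simp [mem_grid]
  have hv : ∀ f : ℤ × ℤ → ℝ, ∑ q ∈ grid s, f q * v q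
      = (∑ q ∈ grid s, f q * w q + ∑ q ∈ grid s, f (-q) * w q) / 2 := by
    intro f
    rw [← sum_grid_comp_neg s (fun q => f (-q) * w q), ← sum_add_distrib, sum_div]
    simp only [v, neg_neg]
    exact sum_congr rfl fun q _ => by ring
  have hp : ∀ f : ℤ × ℤ → ℝ, f (0, 0) = 0 → ∑ q ∈ grid s, f q * p q
      = (∑ q ∈ grid s, f q * w q + ∑ q ∈ grid s, f (-q) * w q) / 2 := by
    intro f hf
    simp only [p, Pi.add_apply, mul_add, sum_add_distrib, sum_mul_single h₀, hf, zero_mul,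
      add_zero, hv]
  refine ⟨p, fun q hq hq₀ => ?_, ?_, ?_, ?_, ?_, ?_, ?_⟩
  · simp only [p, Pi.add_apply, Pi.single_apply, hq₀, if_false, add_zero, v]
    have := hw q hq
    have := hw (-q) (neg_mem_grid hq)
    positivity
  · rw [hp (fun q => (q.1 : ℝ) ^ 2) (by simp)]
    simp [h₁₁]
  · rw [hp (fun q => (q.2 : ℝ) ^ 2) (by simp)]
    simp [h₂₂]
  · rw [hp (fun q => (q.1 : ℝ) * q.2) (by simp)]
    simp [h₁₂]
  · rw [hp (fun q => (q.1 : ℝ)) (by simp)]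
    simp
  · rw [hp (fun q => (q.2 : ℝ)) (by simp)]
    simp
  · simp only [p, Pi.add_apply, sum_add_distrib, sum_pi_single', h₀, if_true]
    ring

lemma exists_atom_of_mem_Sset {s : ℕ} {ξ : ℝ} (hξ : ξ ∈ Sset s) {σ : ℤ} (hσ : |σ| = 1) {μ : ℝ}
    (hμ : 0 ≤ μ) : ∃ a ∈ grid s, ∃ c : ℝ, 0 ≤ c ∧ (a.1 : ℝ) ^ 2 * c = μ * ξ ^ 2 ∧
      (a.2 : ℝ) ^ 2 * c = μ ∧ ((a.1 : ℝ) * a.2) * c = σ * (μ * ξ) := by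
  obtain ⟨i, j, ⟨-, hi⟩, ⟨hj, hj'⟩, rfl⟩ := mem_Sset.1 hξ
  have hj₀ : (j : ℝ) ≠ 0 := by positivity
  have hσ' : (σ : ℝ) ^ 2 = 1 := by rw [← sq_abs, ← Int.cast_abs, hσ]; norm_num
  refine ⟨((i : ℤ), σ * j), ?_, μ / j ^ 2, by positivity, ?_, ?_, ?_⟩
  · rw [mem_grid, abs_mul, hσ]
    simp only [Nat.abs_cast, one_mul]
    exact ⟨by exact_mod_cast hi, by exact_mod_cast hj'⟩
  · push_cast; field_simp
  · push_cast; rw [mul_pow, hσ']; field_simp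
  · push_cast; field_simp

lemma exists_isMMSol_of_twoAtomFeasible {s : ℕ} (hs : 1 ≤ s) {R ρ t : ℝ} {σ : ℤ} (hσ : |σ| = 1)
    (hσt : σ * t = R⁻¹ * ρ) (h : TwoAtomFeasible (Sset s) (R⁻¹ ^ 2) t) :
    ∃ p, IsMMSol s R ρ p := by
  obtain ⟨ξ₁, h₁, ξ₂, h₂, μ₁, μ₂, hμ₁, hμ₂, hx, hy, hxy⟩ := h
  obtain ⟨a₁, ha₁, c₁, hc₁, e₁, f₁, g₁⟩ := exists_atom_of_mem_Sset h₁ hσ hμ₁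
  obtain ⟨a₂, ha₂, c₂, hc₂, e₂, f₂, g₂⟩ := exists_atom_of_mem_Sset h₂ hσ hμ₂
  have h₁₀ : ((1, 0) : ℤ × ℤ) ∈ grid s := by simpa [mem_grid] using hs
  have h₀₁ : ((0, 1) : ℤ × ℤ) ∈ grid s := by simpa [mem_grid] using hs
  set w : ℤ × ℤ → ℝ := Pi.single (1, 0) (1 - (μ₁ * ξ₁ ^ 2 + μ₂ * ξ₂ ^ 2) : ℝ)
    + Pi.single (0, 1) (R⁻¹ ^ 2 - (μ₁ + μ₂)) + Pi.single a₁ c₁ + Pi.single a₂ c₂ with hw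
  have hw₀ : 0 ≤ w := add_nonneg (add_nonneg (add_nonneg (Pi.single_nonneg.2 (sub_nonneg.2 hx))
    (Pi.single_nonneg.2 (sub_nonneg.2 hy))) (Pi.single_nonneg.2 hc₁)) (Pi.single_nonneg.2 hc₂)
  refine exists_isMMSol_of_secondMoments (fun q _ => hw₀ q) ?_ ?_ ?_ <;>
    simp only [hw, Pi.add_apply, mul_add, sum_add_distrib, sum_mul_single h₁₀, sum_mul_single h₀₁,
      sum_mul_single ha₁, sum_mul_single ha₂, e₁, f₁, g₁, e₂, f₂, g₂] <;>
    push_cast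
  · ring
  · ring
  · rw [← hσt, ← hxy]; ring

theorem markov_chain_locality_iff (s : ℕ) (hs : 1 ≤ s) (R ρ : ℝ) (hR : 0 < R)
    (hρ : ρ ∈ Set.Icc (-1:ℝ) 1) :
    (∃ p : ℤ × ℤ → ℝ, IsMMSol s R ρ p) ↔
      (∀ z₁ : ℝ, 0 < z₁ → z₁ < 2 * |ρ| / R →
        2 * R * |ρ| ≤ R^2 * z₁ + (Sset s).sup' (Sset_nonempty hs) (fun ξ => 2*ξ - ξ^2*z₁)) := by
  refine ⟨fun ⟨p, hp⟩ z hz hzρ => hp.two_mul_mul_abs_le_sup' hs hR hz hzρ, fun h => ?_⟩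
  have ht : |R⁻¹ * ρ| = |ρ| / R := by rw [abs_mul, abs_inv, abs_of_pos hR, inv_mul_eq_div]
  obtain ⟨σ, hσ, hσρ⟩ : ∃ σ : ℤ, |σ| = 1 ∧ σ * |R⁻¹ * ρ| = R⁻¹ * ρ := by
    rcases le_total 0 (R⁻¹ * ρ) with hρ₀ | hρ₀
    · exact ⟨1, by simp, by rw [abs_of_nonneg hρ₀]; simp⟩
    · exact ⟨-1, by simp, by rw [abs_of_nonpos hρ₀]; simp⟩
  have hcond : LocalityCondition (Sset s) (R⁻¹ ^ 2) |R⁻¹ * ρ| := by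
    intro z hz hzt
    obtain ⟨ξ, hξ, hsup⟩ := exists_mem_eq_sup' (Sset_nonempty hs) fun ξ => 2 * ξ - ξ ^ 2 * z
    refine ⟨ξ, hξ, ?_⟩
    have := (two_mul_mul_abs_le_iff hR).1 (h z hz (by rwa [mul_div_assoc, ← ht]))
    rwa [hsup, mul_comm _ (R⁻¹ ^ 2)] at this
  have hsq : |R⁻¹ * ρ| ^ 2 ≤ R⁻¹ ^ 2 := by
    rw [sq_abs, mul_pow]
    exact mul_le_of_le_one_right (sq_nonneg _) (sq_le_one_iff_abs_le_one ρ |>.2 (abs_le.2 hρ))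
  exact exists_isMMSol_of_twoAtomFeasible hs hσ hσρ <| hcond.twoAtomFeasible
    (fun _ => pos_of_mem_Sset) (Sset_nonempty hs) (by positivity) (abs_nonneg _) hsq
end

section
/- If s < |\rho| \cdot max(R, 1/R), then there is no non-negative solution (p_{ij})_{-s \le i,j \le s} to the moment-matching equations \sum i^2 p_{ij} = 1, \sum j^2 p_{ij} = R^{-2}, \sum ij p_{ij} = R^{-1}\rho, \sum i p_{ij} = 0, \sum j p_{ij} = 0, \sum p_{ij} = 1. -/
open Finset

/-!
Since `|i| ≤ s` and `|j| ≤ j²` for integers, every term of the cross moment satisfies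
`|i j| p_{ij} ≤ s j² p_{ij}`, and symmetrically `≤ s i² p_{ij}`. Summing, the moment equations give
`|ρ| / R ≤ s / R²` and `|ρ| / R ≤ s`, that is `|ρ| max(R, 1/R) ≤ s`.
-/

section

variable {α : Type*} [CommRing α] [LinearOrder α] [IsStrictOrderedRing α]

theorem Int.abs_cast_le_cast_sq (j : ℤ) : |(j : α)| ≤ (j : α) ^ 2 := by
  have h : |j| ≤ j ^ 2 := Int.natCast_natAbs j ▸ Int.natAbs_le_self_sq j
  exact_mod_cast h

theorem abs_sum_mul_mul_le {ι : Type*} (S : Finset ι) (x y : ι → ℤ) (w : ι → α) (s : α)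
    (hx : ∀ q ∈ S, |(x q : α)| ≤ s) (hw : ∀ q ∈ S, y q ≠ 0 → 0 ≤ w q) :
    |∑ q ∈ S, ((x q : α) * y q) * w q| ≤ s * ∑ q ∈ S, (y q : α) ^ 2 * w q := by
  rw [Finset.mul_sum]
  refine (Finset.abs_sum_le_sum_abs _ _).trans (Finset.sum_le_sum fun q hq => ?_)
  by_cases hy : y q = 0
  · simp [hy]
  have hwq := hw q hq hy
  calc |((x q : α) * y q) * w q| = |(x q : α)| * |(y q : α)| * w q := by
        rw [abs_mul, abs_mul, abs_of_nonneg hwq]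
    _ ≤ s * (y q : α) ^ 2 * w q :=
        mul_le_mul_of_nonneg_right (mul_le_mul (hx q hq) (Int.abs_cast_le_cast_sq _)
          (abs_nonneg _) ((abs_nonneg _).trans (hx q hq))) hwq
    _ = s * ((y q : α) ^ 2 * w q) := mul_assoc _ _ _

end

theorem abs_le_of_mem_grid {s : ℕ} {q : ℤ × ℤ} (hq : q ∈ grid s) :
    |(q.1 : ℝ)| ≤ s ∧ |(q.2 : ℝ)| ≤ s := by
  simp only [grid, Finset.mem_product, Finset.mem_Icc] at hq
  constructor <;> rw [← Int.cast_abs]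
  · exact_mod_cast abs_le.2 hq.1
  · exact_mod_cast abs_le.2 hq.2

theorem no_solution_of_small_stencil_general (s : ℕ) (R ρ : ℝ) (hR : 0 < R)
    (hsmall : (s : ℝ) < |ρ| * max R R⁻¹) :
    ¬ ∃ p : ℤ × ℤ → ℝ, IsMMSol s R ρ p := by
  rintro ⟨p, hpos, h2i, h2j, hij, -, -, -⟩
  have hw (y : ℤ × ℤ → ℤ) (hy : ∀ q, y q ≠ 0 → q ≠ (0, 0)) :
      ∀ q ∈ grid s, y q ≠ 0 → 0 ≤ p q := fun q hq h => hpos q hq (hy q h)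
  have hbound₁ : |R⁻¹ * ρ| ≤ s * R⁻¹ ^ 2 := by
    rw [← hij, ← h2j]
    refine abs_sum_mul_mul_le _ Prod.fst Prod.snd p s (fun q hq => (abs_le_of_mem_grid hq).1)
      (hw _ fun _ h h0 => h (by simp [h0]))
  have hbound₂ : |R⁻¹ * ρ| ≤ s * 1 := by
    have hji : ∑ q ∈ grid s, ((q.2 : ℝ) * q.1) * p q = R⁻¹ * ρ := by
      simpa only [mul_comm] using hij
    rw [← hji, ← h2i]
    refine abs_sum_mul_mul_le _ Prod.snd Prod.fst p s (fun q hq => (abs_le_of_mem_grid hq).2)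
      (hw _ fun _ h h0 => h (by simp [h0]))
  rw [abs_mul, abs_of_pos (inv_pos.2 hR)] at hbound₁ hbound₂
  have hρR : |ρ| * R ≤ s := by
    have := mul_le_mul_of_nonneg_left hbound₁ (sq_nonneg R)
    field_simp at this
    linarith
  have hρR' : |ρ| * R⁻¹ ≤ s := by linarith
  rw [mul_max_of_nonneg _ _ (abs_nonneg ρ)] at hsmall
  exact (max_le hρR hρR').not_gt hsmall

theorem no_solution_of_small_stencil (s : ℕ) (hs : 1 ≤ s) (R ρ : ℝ) (hR : 0 < R)
    (hρ : ρ ∈ Set.Icc (-1:ℝ) 1) (hsmall : (s : ℝ) < |ρ| * max R R⁻¹) :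
    ¬ ∃ p : ℤ × ℤ → ℝ, IsMMSol s R ρ p :=
  no_solution_of_small_stencil_general s R ρ hR hsmall
end

section
/- If R \in S = { i/j : 1 \le i,j \le s }, then for every \rho \in [-1,1] the inequality inf_{0 < z_1 < 2|\rho|/R} ( R^2 z_1 + max_{\xi \in S} (2\xi - \xi^2 z_1) ) \ge 2R|\rho| holds; i.e., a non-negative moment-matching solution exists for all correlations when R is a ratio of integers at most s. -/
open Finset

/-! The point `ξ = R` of `S` alone gives `R²z₁ + (2ξ - ξ²z₁) = 2R ≥ 2R|ρ|`, for every `z₁`.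
For `R = i/j`, the weights `(1 + ρ)/(4i²)` on `±(i, j)`, `(1 - ρ)/(4i²)` on `±(i, -j)` and
`1 - 1/i² ≥ 0` on the origin match the moments: the first moments vanish by symmetry, and the
second moments are `1`, `j²/i² = R⁻²` and `ρ j/i = R⁻¹ρ`. -/

theorem two_mul_le_sq_mul_add_sup' {T : Finset ℝ} (hT : T.Nonempty) {R : ℝ} (hR : R ∈ T)
    (z : ℝ) : 2 * R ≤ R ^ 2 * z + T.sup' hT (fun ξ => 2 * ξ - ξ ^ 2 * z) := by
  have := T.le_sup' (fun ξ => 2 * ξ - ξ ^ 2 * z) hR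
  linarith

def symmetricWeights (a b : ℤ) (α β γ : ℝ) (q : ℤ × ℤ) : ℝ :=
  (if q = (a, b) then α else 0) + (if q = (-a, -b) then α else 0) +
  (if q = (a, -b) then β else 0) + (if q = (-a, b) then β else 0) +
  (if q = (0, 0) then γ else 0)

theorem symmetricWeights_nonneg {a b : ℤ} {α β γ : ℝ} (hα : 0 ≤ α) (hβ : 0 ≤ β) (hγ : 0 ≤ γ)
    (q : ℤ × ℤ) : 0 ≤ symmetricWeights a b α β γ q := by
  unfold symmetricWeights
  split_ifs <;> linarith

theorem sum_mul_symmetricWeights {G : Finset (ℤ × ℤ)} {a b : ℤ} (h₁ : (a, b) ∈ G)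
    (h₂ : (-a, -b) ∈ G) (h₃ : (a, -b) ∈ G) (h₄ : (-a, b) ∈ G) (h₀ : (0, 0) ∈ G)
    (α β γ : ℝ) (f : ℤ × ℤ → ℝ) :
    ∑ q ∈ G, f q * symmetricWeights a b α β γ q =
      α * (f (a, b) + f (-a, -b)) + β * (f (a, -b) + f (-a, b)) + γ * f (0, 0) := by
  simp only [symmetricWeights, mul_add, mul_ite, mul_zero, sum_add_distrib, sum_ite_eq',
    h₁, h₂, h₃, h₄, h₀, if_true]
  ring

theorem isMMSol_symmetricWeights {s i j : ℕ} (hi : i ∈ Icc 1 s) (hj : j ∈ Icc 1 s) {ρ : ℝ}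
    (hρ : ρ ∈ Set.Icc (-1 : ℝ) 1) :
    IsMMSol s (i / j) ρ
      (symmetricWeights i j ((1 + ρ) / (4 * i ^ 2)) ((1 - ρ) / (4 * i ^ 2)) (1 - 1 / i ^ 2)) := by
  rw [mem_Icc] at hi hj
  obtain ⟨hρ₁, hρ₂⟩ := hρ
  have hi₁ : (1 : ℝ) ≤ i := by exact_mod_cast hi.1
  have hj₀ : (0 : ℝ) < j := by exact_mod_cast hj.1
  have hmem : ∀ a b : ℤ, |a| ≤ i → |b| ≤ j → (a, b) ∈ grid s := by
    intro a b ha hb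
    simp only [grid, mem_product, mem_Icc, ← abs_le]
    omega
  have hsum := sum_mul_symmetricWeights (hmem i j (by simp) (by simp))
    (hmem (-i) (-j) (by simp) (by simp)) (hmem i (-j) (by simp) (by simp))
    (hmem (-i) j (by simp) (by simp)) (hmem 0 0 (by simp) (by simp))
  have hmass := hsum ((1 + ρ) / (4 * i ^ 2)) ((1 - ρ) / (4 * i ^ 2)) (1 - 1 / i ^ 2) fun _ => 1
  simp only [one_mul] at hmass
  refine ⟨fun q _ _ => symmetricWeights_nonneg ?_ ?_ ?_ q, ?_, ?_, ?_, ?_, ?_, ?_⟩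
  · exact div_nonneg (by linarith) (by positivity)
  · exact div_nonneg (by linarith) (by positivity)
  · rw [sub_nonneg, div_le_one (by positivity)]
    nlinarith
  all_goals
    first | rw [hsum] | rw [hmass]
    push_cast
    field_simp
    ring

theorem rational_ratio_always_monotone_general (s : ℕ) (hs : 1 ≤ s) (R ρ : ℝ)
    (hρ : ρ ∈ Set.Icc (-1:ℝ) 1) (hRS : R ∈ Sset s) :
    (∀ z₁ : ℝ, 0 < z₁ → z₁ < 2 * |ρ| / R →
        2 * R * |ρ| ≤ R^2 * z₁ + (Sset s).sup' (Sset_nonempty hs) (fun ξ => 2*ξ - ξ^2*z₁)) ∧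
      ∃ p : ℤ × ℤ → ℝ, IsMMSol s R ρ p := by
  obtain ⟨⟨i, j⟩, hij, rfl⟩ := mem_image.1 hRS
  rw [mem_product] at hij
  refine ⟨fun z₁ _ _ => ?_, _, isMMSol_symmetricWeights hij.1 hij.2 hρ⟩
  calc 2 * (i / j : ℝ) * |ρ| ≤ 2 * (i / j) := mul_le_of_le_one_right (by positivity) (abs_le.2 hρ)
    _ ≤ _ := two_mul_le_sq_mul_add_sup' _ hRS z₁

theorem rational_ratio_always_monotone (s : ℕ) (hs : 1 ≤ s) (R ρ : ℝ) (hR : 0 < R)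
    (hρ : ρ ∈ Set.Icc (-1:ℝ) 1) (hRS : R ∈ Sset s) :
    (∀ z₁ : ℝ, 0 < z₁ → z₁ < 2 * |ρ| / R →
        2 * R * |ρ| ≤ R^2 * z₁ + (Sset s).sup' (Sset_nonempty hs) (fun ξ => 2*ξ - ξ^2*z₁)) ∧
      ∃ p : ℤ × ℤ → ℝ, IsMMSol s R ρ p :=
  rational_ratio_always_monotone_general s hs R ρ hρ hRS
end

section
/- If R > 0 is irrational, then for every integer s \ge 1 there exists \rho \in (-1,1) such that no non-negative solution to the moment-matching equations (second-, first-, and zero-order conditions with parameters R, \rho, s) exists. Equivalently, sup over \rho admitting a solution is strictly less than 1 for each fixed s. -/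
open Finset

/-!
A solution `p` makes `∑ (i - R j)² p_{ij} = 2 (1 - ρ)`. Since `R` is irrational, `i - R j`
vanishes on the grid only where `i = 0`, so by finiteness `ε i² ≤ (i - R j)²` there for some
`ε > 0`; as `p ≥ 0` off the origin and `∑ i² p_{ij} = 1`, this gives `ε ≤ 2 (1 - ρ)`.
Any `ρ ∈ (1 - ε / 2, 1)` therefore admits no solution.
-/

theorem Finset.exists_pos_mul_le {ι : Type*} (T : Finset ι) {f g : ι → ℝ}
    (hf : ∀ x ∈ T, 0 ≤ f x) (hfg : ∀ x ∈ T, f x = 0 → g x = 0) :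
    ∃ ε > 0, ∀ x ∈ T, ε * g x ≤ f x := by
  have hx : ∀ x ∈ T, ∀ᶠ ε in nhds (0 : ℝ), ε * g x ≤ f x := by
    intro x hxT
    rcases (hf x hxT).eq_or_lt with h | h
    · simp [← h, hfg x hxT h.symm]
    · have hlim := (continuous_mul_const (g x)).tendsto' 0 0 (zero_mul _)
      exact (hlim.eventually (gt_mem_nhds h)).mono fun _ => le_of_lt
  have hall : ∀ᶠ ε in nhdsWithin (0 : ℝ) (Set.Ioi 0), ∀ x ∈ T, ε * g x ≤ f x :=
    nhdsWithin_le_nhds (T.eventually_all.2 hx)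
  exact (hall.and self_mem_nhdsWithin).exists.imp fun ε h => ⟨h.2, h.1⟩

theorem Irrational.intCast_sub_mul_intCast_ne_zero {R : ℝ} (hR : Irrational R) {i : ℤ}
    (hi : i ≠ 0) (j : ℤ) : (i : ℝ) - R * j ≠ 0 := by
  rcases eq_or_ne j 0 with rfl | hj
  · simpa using hi
  · exact sub_ne_zero.2 ((hR.mul_intCast hj).ne_int i).symm

theorem exists_pos_mul_sq_le_sq_sub_mul {R : ℝ} (hR : Irrational R) (s : ℕ) :
    ∃ ε > 0, ∀ q ∈ grid s, ε * (q.1 : ℝ) ^ 2 ≤ ((q.1 : ℝ) - R * q.2) ^ 2 := by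
  refine (grid s).exists_pos_mul_le (fun _ _ => sq_nonneg _) fun q _ h => ?_
  by_contra hq
  exact hR.intCast_sub_mul_intCast_ne_zero (by simpa using hq) q.2
    ((pow_eq_zero_iff two_ne_zero).1 h)

namespace IsMMSol

variable {s : ℕ} {R ρ : ℝ} {p : ℤ × ℤ → ℝ}

theorem sum_sq_sub_mul_mul_eq (hp : IsMMSol s R ρ p) (hR : R ≠ 0) :
    ∑ q ∈ grid s, ((q.1 : ℝ) - R * q.2) ^ 2 * p q = 2 * (1 - ρ) := by
  obtain ⟨-, h2i, h2j, hcross, -⟩ := hp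
  have hexpand : ∀ q ∈ grid s, ((q.1 : ℝ) - R * q.2) ^ 2 * p q =
      (q.1 : ℝ) ^ 2 * p q - 2 * R * ((q.1 * q.2 : ℝ) * p q) + R ^ 2 * ((q.2 : ℝ) ^ 2 * p q) :=
    fun _ _ => by ring
  rw [sum_congr rfl hexpand, sum_add_distrib, sum_sub_distrib, ← mul_sum, ← mul_sum, h2i, h2j,
    hcross]
  field_simp
  ring

theorem le_sum_mul_of_mul_sq_le (hp : IsMMSol s R ρ p) {ε : ℝ} {f : ℤ × ℤ → ℝ}
    (hf : ∀ q ∈ grid s, ε * (q.1 : ℝ) ^ 2 ≤ f q) (hf0 : f (0, 0) = 0) :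
    ε ≤ ∑ q ∈ grid s, f q * p q := by
  calc ε = ∑ q ∈ grid s, ε * (q.1 : ℝ) ^ 2 * p q := by
        simp_rw [mul_assoc, ← mul_sum, hp.2.1, mul_one]
    _ ≤ ∑ q ∈ grid s, f q * p q := by
      refine sum_le_sum fun q hq => ?_
      rcases eq_or_ne q (0, 0) with rfl | h0
      · simp [hf0]
      · exact mul_le_mul_of_nonneg_right (hf q hq) (hp.1 q hq h0)

end IsMMSol

theorem irrational_ratio_fails_for_some_rho_general (R : ℝ) (hIrr : Irrational R)
    (s : ℕ) :
    ∃ ρ : ℝ, ρ ∈ Set.Ioo (-1:ℝ) 1 ∧ ¬ ∃ p : ℤ × ℤ → ℝ, IsMMSol s R ρ p := by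
  obtain ⟨ε, hε, hbound⟩ := exists_pos_mul_sq_le_sq_sub_mul hIrr s
  have hmin_pos : 0 < min ε 1 := lt_min hε one_pos
  refine ⟨1 - min ε 1 / 4, ⟨by linarith [min_le_right ε 1], by linarith⟩, ?_⟩
  rintro ⟨p, hp⟩
  have hle := hp.le_sum_mul_of_mul_sq_le hbound (by simp)
  rw [hp.sum_sq_sub_mul_mul_eq hIrr.ne_zero] at hle
  linarith [min_le_left ε 1]

theorem irrational_ratio_fails_for_some_rho (R : ℝ) (hR : 0 < R) (hIrr : Irrational R)
    (s : ℕ) (hs : 1 ≤ s) :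
    ∃ ρ : ℝ, ρ ∈ Set.Ioo (-1:ℝ) 1 ∧ ¬ ∃ p : ℤ × ℤ → ℝ, IsMMSol s R ρ p :=
  irrational_ratio_fails_for_some_rho_general R hIrr s
end

section
/- For s = 1, a non-negative moment-matching solution with parameters (R, \rho) exists if and only if |\rho| \le min(R, 1/R). -/
open Finset

/-!
On `{-1, 0, 1}²` we have `|i j| ≤ min (i², j²)`, both sides vanishing at the origin, the one
point whose weight may be negative. Hence `|E[XY]| ≤ min (E[X²], E[Y²])`, that is,
`|ρ| / R ≤ min (1, R⁻²)`. Conversely, with `t = ρ / R`, the weights symmetric under `q ↦ -q`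
that put total mass `t⁺` on `±(1,1)`, `t⁻` on `±(1,-1)`, `1 - |t|` on `±(1,0)`, `R⁻² - |t|` on
`±(0,1)` and the (possibly negative) remainder at the origin match all the moments.
-/

lemma abs_sum_mul_le_sum_mul {α : Type*} {s : Finset α} {f g w : α → ℝ}
    (hfg : ∀ q ∈ s, |f q| ≤ g q) (hw : ∀ q ∈ s, g q ≠ 0 → 0 ≤ w q) :
    |∑ q ∈ s, f q * w q| ≤ ∑ q ∈ s, g q * w q := by
  refine (abs_sum_le_sum_abs _ _).trans (sum_le_sum fun q hq => ?_)
  by_cases hg : g q = 0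
  · have hf : f q = 0 := abs_nonpos_iff.1 (hg ▸ hfg q hq)
    simp [hf, hg]
  · rw [abs_mul, abs_of_nonneg (hw q hq hg)]
    exact mul_le_mul_of_nonneg_right (hfg q hq) (hw q hq hg)

lemma abs_mul_le_sq_of_mem_grid_one {q : ℤ × ℤ} (hq : q ∈ grid 1) :
    |(q.1 : ℝ) * q.2| ≤ (q.1 : ℝ) ^ 2 ∧ |(q.1 : ℝ) * q.2| ≤ (q.2 : ℝ) ^ 2 := by
  simp only [grid, Nat.cast_one, mem_product, mem_Icc] at hq
  obtain ⟨⟨h1, h1'⟩, h2, h2'⟩ := hq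
  interval_cases q.1 <;> interval_cases q.2 <;> norm_num

lemma abs_le_min_self_inv_iff {R ρ : ℝ} (hR : 0 < R) :
    |ρ| ≤ min R R⁻¹ ↔ |R⁻¹ * ρ| ≤ 1 ∧ |R⁻¹ * ρ| ≤ R⁻¹ ^ 2 := by
  rw [le_min_iff, abs_mul, abs_of_pos (inv_pos.2 hR), inv_mul_le_iff₀ hR, mul_one, sq,
    mul_le_mul_iff_right₀ (inv_pos.2 hR)]

lemma abs_le_min_of_isMMSol_one {R ρ : ℝ} {p : ℤ × ℤ → ℝ} (hR : 0 < R)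
    (hp : IsMMSol 1 R ρ p) : |ρ| ≤ min R R⁻¹ := by
  obtain ⟨hnn, hX, hY, hXY, -⟩ := hp
  have hw₁ : ∀ q ∈ grid 1, (q.1 : ℝ) ^ 2 ≠ 0 → 0 ≤ p q := fun q hq h =>
    hnn q hq (by rintro rfl; simp at h)
  have hw₂ : ∀ q ∈ grid 1, (q.2 : ℝ) ^ 2 ≠ 0 → 0 ≤ p q := fun q hq h =>
    hnn q hq (by rintro rfl; simp at h)
  rw [abs_le_min_self_inv_iff hR, ← hXY, ← hX, ← hY]
  exact ⟨abs_sum_mul_le_sum_mul (fun q hq => (abs_mul_le_sq_of_mem_grid_one hq).1) hw₁,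
    abs_sum_mul_le_sum_mul (fun q hq => (abs_mul_le_sq_of_mem_grid_one hq).2) hw₂⟩

lemma sum_grid_one (f : ℤ × ℤ → ℝ) :
    ∑ q ∈ grid 1, f q = f (-1,-1) + f (-1,0) + f (-1,1) + f (0,-1) + f (0,0) + f (0,1)
      + f (1,-1) + f (1,0) + f (1,1) := by
  have hIcc : Icc (-1 : ℤ) 1 = {-1, 0, 1} := by decide
  rw [grid, Nat.cast_one, hIcc, sum_product]
  simp only [Int.reduceNeg, mem_insert, neg_eq_zero, one_ne_zero, mem_singleton, reduceCtorEq,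
    or_self, not_false_eq_true, sum_insert, zero_ne_one, sum_singleton]
  ring

noncomputable def symmWeights (a b c d : ℝ) (q : ℤ × ℤ) : ℝ :=
  if q = (0, 0) then 1 - a - b - c - d
  else if q = (1, 1) ∨ q = (-1, -1) then a / 2
  else if q = (1, -1) ∨ q = (-1, 1) then b / 2
  else if q.2 = 0 then c / 2
  else if q.1 = 0 then d / 2
  else 0

lemma symmWeights_nonneg {a b c d : ℝ} (ha : 0 ≤ a) (hb : 0 ≤ b) (hc : 0 ≤ c) (hd : 0 ≤ d)
    {q : ℤ × ℤ} (hq : q ≠ (0, 0)) : 0 ≤ symmWeights a b c d q := by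
  rw [symmWeights, if_neg hq]
  split_ifs <;> positivity

lemma isMMSol_one_symmWeights {R ρ a b c d : ℝ} (ha : 0 ≤ a) (hb : 0 ≤ b) (hc : 0 ≤ c)
    (hd : 0 ≤ d) (hX : a + b + c = 1) (hY : a + b + d = R⁻¹ ^ 2) (hXY : a - b = R⁻¹ * ρ) :
    IsMMSol 1 R ρ (symmWeights a b c d) := by
  refine ⟨fun q _ hq => symmWeights_nonneg ha hb hc hd hq, ?_, ?_, ?_, ?_, ?_, ?_⟩ <;>
    rw [sum_grid_one] <;> norm_num [symmWeights] <;> linarith [inv_pow R 2]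

lemma exists_isMMSol_one_of_abs_le_min {R ρ : ℝ} (hR : 0 < R) (h : |ρ| ≤ min R R⁻¹) :
    ∃ p, IsMMSol 1 R ρ p := by
  obtain ⟨hX, hY⟩ := (abs_le_min_self_inv_iff hR).1 h
  set t := R⁻¹ * ρ
  exact ⟨_, isMMSol_one_symmWeights (posPart_nonneg t) (negPart_nonneg t) (sub_nonneg.2 hX)
    (sub_nonneg.2 hY) (by rw [posPart_add_negPart]; ring) (by rw [posPart_add_negPart]; ring)
    (posPart_sub_negPart t)⟩

theorem s_eq_one_criterion_general (R ρ : ℝ) (hR : 0 < R) :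
    (∃ p : ℤ × ℤ → ℝ, IsMMSol 1 R ρ p) ↔ |ρ| ≤ min R R⁻¹ :=
  ⟨fun ⟨_, hp⟩ => abs_le_min_of_isMMSol_one hR hp, exists_isMMSol_one_of_abs_le_min hR⟩

theorem s_eq_one_criterion (R ρ : ℝ) (hR : 0 < R) (hρ : ρ ∈ Set.Icc (-1:ℝ) 1) :
    (∃ p : ℤ × ℤ → ℝ, IsMMSol 1 R ρ p) ↔ |ρ| ≤ min R R⁻¹ :=
  s_eq_one_criterion_general R ρ hR
end
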